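/- For the 1D micro/upscaling setting: if |F − a⁰ ∂_xx û| ≤ C(ε/η)^{q+2}|∂_xx û| holds for every quadratic polynomial û (upscaling error bound), and the macroscopic leapfrog scheme is stable (Corollary for leapfrog with CFL Δt < 2H/(d√c₂)), then the error eⁿ = Uⁿ − uⁿ between the EFA macrosolution and the discrete homogenized solution, both with identical initial data, satisfies ‖eⁿ⁺¹‖ ≤ C_T (ε/η)^{q+2} uniformly for nΔt ≤ T, provided the discrete Laplacian of Uⁿ is uniformly bounded. -/
import Mathlib


/-- The 1D centered second-difference Laplacian on a uniform grid of spacing `Hh`. -/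
noncomputable def dLap (Hh : ℝ) (u : ℤ → ℝ) (i : ℤ) : ℝ :=
  (u (i + 1) - 2 * u i + u (i - 1)) / Hh ^ 2

theorem stmt15 (N : ℕ) (hN : 2 ≤ N)
    (T Hh Δt a0 c2 C B : ℝ) (q : ℕ)
    (hT : 0 < T) (hH : 0 < Hh) (hΔt : 0 < Δt)
    (hc2 : 0 < c2) (ha0 : 0 < a0) (ha0c2 : a0 ≤ c2)
    (hC : 0 ≤ C) (hB : 0 ≤ B)
    (hCFL : Δt < 2 * Hh / (1 * Real.sqrt c2))
    (f : ℕ → ℤ → ℝ) :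
    ∃ CT : ℝ, ∀ ε η : ℝ, 0 < ε → ε ≤ η →
      ∀ U u δ : ℕ → ℤ → ℝ,
        -- homogeneous Dirichlet boundary conditions
        (∀ n i, i ≤ 0 ∨ (N : ℤ) ≤ i → U n i = 0) →
        (∀ n i, i ≤ 0 ∨ (N : ℤ) ≤ i → u n i = 0) →
        -- EFA macro scheme: `D_t² Uⁿ = F(x_I, Δ_H Uⁿ) + fⁿ` with
        -- `F = a⁰ Δ_H Uⁿ + δⁿ`
        (∀ n, 1 ≤ n → ∀ i, (U (n + 1) i - 2 * U n i + U (n - 1) i) / Δt ^ 2 =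
          a0 * dLap Hh (U n) i + δ n i + f n i) →
        -- discrete homogenized scheme
        (∀ n, 1 ≤ n → ∀ i, (u (n + 1) i - 2 * u n i + u (n - 1) i) / Δt ^ 2 =
          a0 * dLap Hh (u n) i + f n i) →
        -- upscaling error bound
        (∀ n i, |δ n i| ≤ C * (ε / η) ^ (q + 2) * |dLap Hh (U n) i|) →
        -- uniformly bounded discrete Laplacian of the EFA solution
        (∀ n i, |dLap Hh (U n) i| ≤ B) →
        -- identical initial data
        U 0 = u 0 → U 1 = u 1 →
        ∀ n : ℕ, (n : ℝ) * Δt ≤ T →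
          Real.sqrt (∑ i ∈ Finset.range N, (U (n + 1) (i : ℤ) - u (n + 1) (i : ℤ)) ^ 2 * Hh) ≤
            CT * (ε / η) ^ (q + 2) := by
  obtain ⟨m, hm⟩ := exists_nat_ge (T / Δt)
  set s : ℝ := 4 * a0 * Δt ^ 2 / Hh ^ 2 with hs
  have hs0 : 0 ≤ s := by positivity
  set Kp : ℝ := 4 + s with hKp
  have hKp1 : (1 : ℝ) ≤ Kp := by simp only [hKp]; linarith
  have hKp0 : (0 : ℝ) ≤ Kp := by linarith
  set A : ℝ := Δt ^ 2 * C * B with hA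
  have hA0 : 0 ≤ A := by positivity
  refine ⟨A * Kp ^ (m + 1) * Real.sqrt (N * Hh), ?_⟩
  intro ε η hε hεη U u δ hUbc hubc hU hu hδ hBd h0 h1 n hnT
  have hη : 0 < η := lt_of_lt_of_le hε hεη
  set ρ : ℝ := (ε / η) ^ (q + 2) with hρ
  have hρ0 : 0 ≤ ρ := by positivity
  -- key pointwise estimate
  have key : ∀ n : ℕ, ∀ i : ℤ, |U n i - u n i| ≤ ρ * A * Kp ^ n := by
    intro n
    induction n using Nat.strong_induction_on with
    | _ n ih =>
      match n, ih with
      | 0, _ =>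
        intro i
        have : U 0 i = u 0 i := congrFun h0 i
        rw [this, sub_self, abs_zero]
        positivity
      | 1, _ =>
        intro i
        have : U 1 i = u 1 i := congrFun h1 i
        rw [this, sub_self, abs_zero]
        positivity
      | (k+2), ih =>
        intro i
        have hk1 : ∀ j, |U (k+1) j - u (k+1) j| ≤ ρ * A * Kp ^ (k+1) :=
          ih (k+1) (by omega)
        have hrec := hU (k+1) (by omega) i
        have hrec' := hu (k+1) (by omega) i
        have ht2 : (Δt : ℝ) ^ 2 ≠ 0 := by positivity
        have h11 : k+1+1 = k+2 := rfl
        have h10 : k+1-1 = k := rfl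
        rw [h11, h10, div_eq_iff ht2] at hrec hrec'
        have e2 : U (k+2) i - u (k+2) i =
            2*(U (k+1) i - u (k+1) i) - (U k i - u k i)
            + Δt^2 * (a0 * (dLap Hh (U (k+1)) i - dLap Hh (u (k+1)) i) + δ (k+1) i) := by
          linear_combination hrec - hrec'
        -- bound on discrete Laplacian of the error
        have hDe : |dLap Hh (U (k+1)) i - dLap Hh (u (k+1)) i| ≤
            4 * (ρ*A*Kp^(k+1)) / Hh^2 := by
          have hb1 := abs_le.mp (hk1 (i+1))
          have hb2 := abs_le.mp (hk1 i)
          have hb3 := abs_le.mp (hk1 (i-1))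
          have hnum : |(U (k+1) (i+1) - 2*U (k+1) i + U (k+1) (i-1))
              - (u (k+1) (i+1) - 2*u (k+1) i + u (k+1) (i-1))| ≤ 4*(ρ*A*Kp^(k+1)) := by
            rw [abs_le]
            constructor <;> linarith [hb1.1, hb1.2, hb2.1, hb2.2, hb3.1, hb3.2]
          unfold dLap
          rw [div_sub_div_same, abs_div, abs_of_pos (by positivity : (0:ℝ) < Hh^2)]
          gcongr
        have hd : |δ (k+1) i| ≤ ρ * (C * B) := by
          calc |δ (k+1) i| ≤ C * ρ * |dLap Hh (U (k+1)) i| := by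
                have := hδ (k+1) i; simpa [hρ] using this
            _ ≤ C * ρ * B := by
                have := hBd (k+1) i
                exact mul_le_mul_of_nonneg_left this (by positivity)
            _ = ρ * (C * B) := by ring
        -- triangle inequality
        have tri : |U (k+2) i - u (k+2) i| ≤
            2*(ρ*A*Kp^(k+1)) + ρ*A*Kp^k +
            Δt^2 * (a0 * (4*(ρ*A*Kp^(k+1))/Hh^2) + ρ*(C*B)) := by
          rw [e2]
          have t1 : |2*(U (k+1) i - u (k+1) i) - (U k i - u k i)
              + Δt^2 * (a0 * (dLap Hh (U (k+1)) i - dLap Hh (u (k+1)) i) + δ (k+1) i)|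
              ≤ |2*(U (k+1) i - u (k+1) i) - (U k i - u k i)|
                + |Δt^2 * (a0 * (dLap Hh (U (k+1)) i - dLap Hh (u (k+1)) i) + δ (k+1) i)| :=
            abs_add_le _ _
          have t2 : |2*(U (k+1) i - u (k+1) i) - (U k i - u k i)| ≤
              2*(ρ*A*Kp^(k+1)) + ρ*A*Kp^k := by
            calc |2*(U (k+1) i - u (k+1) i) - (U k i - u k i)|
                ≤ |2*(U (k+1) i - u (k+1) i)| + |U k i - u k i| := abs_sub _ _
              _ ≤ 2*(ρ*A*Kp^(k+1)) + ρ*A*Kp^k := by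
                  rw [abs_mul, abs_two]
                  have := hk1 i
                  have := ih k (by omega) i
                  linarith
          have t3 : |Δt^2 * (a0 * (dLap Hh (U (k+1)) i - dLap Hh (u (k+1)) i) + δ (k+1) i)|
              ≤ Δt^2 * (a0 * (4*(ρ*A*Kp^(k+1))/Hh^2) + ρ*(C*B)) := by
            rw [abs_mul, abs_of_pos (by positivity : (0:ℝ) < Δt^2)]
            have t4 : |a0 * (dLap Hh (U (k+1)) i - dLap Hh (u (k+1)) i) + δ (k+1) i|
                ≤ a0 * (4*(ρ*A*Kp^(k+1))/Hh^2) + ρ*(C*B) := by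
              calc |a0 * (dLap Hh (U (k+1)) i - dLap Hh (u (k+1)) i) + δ (k+1) i|
                  ≤ |a0 * (dLap Hh (U (k+1)) i - dLap Hh (u (k+1)) i)| + |δ (k+1) i| :=
                    abs_add_le _ _
                _ ≤ a0 * (4*(ρ*A*Kp^(k+1))/Hh^2) + ρ*(C*B) := by
                    rw [abs_mul, abs_of_pos ha0]
                    have := mul_le_mul_of_nonneg_left hDe ha0.le
                    linarith
            exact mul_le_mul_of_nonneg_left t4 (by positivity)
          linarith
        -- arithmetic closing step
        have hid : Δt^2 * (a0 * (4*(ρ*A*Kp^(k+1))/Hh^2) + ρ*(C*B))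
            = s * (ρ*A*Kp^(k+1)) + ρ*A := by
          rw [hs, hA]
          field_simp
        have hp1 : Kp^k ≤ Kp^(k+1) := pow_le_pow_right₀ hKp1 (by omega)
        have hp2 : (1:ℝ) ≤ Kp^(k+1) := one_le_pow₀ hKp1
        have q1 : ρ*A*Kp^k ≤ ρ*A*Kp^(k+1) :=
          mul_le_mul_of_nonneg_left hp1 (by positivity)
        have q2 : ρ*A*1 ≤ ρ*A*Kp^(k+1) :=
          mul_le_mul_of_nonneg_left hp2 (by positivity)
        have hfin : ρ*A*Kp^(k+2) = ρ*A*Kp^(k+1)*Kp := by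
          rw [pow_succ]; ring
        rw [hfin, hKp]
        rw [hid] at tri
        linarith [tri, q1, q2]
  -- from pointwise bound to the final estimate
  have hnm : n ≤ m := by
    have h1' : (n : ℝ) ≤ T / Δt := (le_div_iff₀ hΔt).mpr hnT
    exact_mod_cast h1'.trans hm
  set Mf : ℝ := ρ * A * Kp ^ (m+1) with hMf
  have hMf0 : 0 ≤ Mf := by positivity
  have hptw : ∀ i : ℤ, |U (n+1) i - u (n+1) i| ≤ Mf := by
    intro i
    refine (key (n+1) i).trans ?_
    exact mul_le_mul_of_nonneg_left (pow_le_pow_right₀ hKp1 (by omega)) (by positivity)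
  have hsum : (∑ i ∈ Finset.range N, (U (n + 1) (i : ℤ) - u (n + 1) (i : ℤ)) ^ 2 * Hh)
      ≤ (N : ℝ) * (Mf ^ 2 * Hh) := by
    calc (∑ i ∈ Finset.range N, (U (n + 1) (i : ℤ) - u (n + 1) (i : ℤ)) ^ 2 * Hh)
        ≤ ∑ i ∈ Finset.range N, Mf ^ 2 * Hh := by
          apply Finset.sum_le_sum
          intro i _
          have hb := abs_le.mp (hptw (i : ℤ))
          exact mul_le_mul_of_nonneg_right (sq_le_sq' hb.1 hb.2) hH.le
      _ = (N : ℝ) * (Mf ^ 2 * Hh) := by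
          rw [Finset.sum_const, Finset.card_range, nsmul_eq_mul]
  have hsq : (N : ℝ) * (Mf ^ 2 * Hh) = (A * Kp ^ (m + 1) * Real.sqrt (N * Hh) * ρ) ^ 2 := by
    have hss : (Real.sqrt ((N : ℝ) * Hh)) ^ 2 = (N : ℝ) * Hh :=
      Real.sq_sqrt (by positivity)
    rw [hMf, show (A * Kp ^ (m + 1) * Real.sqrt ((N:ℝ) * Hh) * ρ) ^ 2
      = (Real.sqrt ((N:ℝ) * Hh)) ^ 2 * (A * Kp ^ (m+1) * ρ) ^ 2 from by ring, hss]
    ring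
  calc Real.sqrt (∑ i ∈ Finset.range N, (U (n + 1) (i : ℤ) - u (n + 1) (i : ℤ)) ^ 2 * Hh)
      ≤ Real.sqrt ((A * Kp ^ (m + 1) * Real.sqrt (N * Hh) * ρ) ^ 2) := by
        apply Real.sqrt_le_sqrt
        rw [← hsq]; exact hsum
    _ = A * Kp ^ (m + 1) * Real.sqrt (N * Hh) * ρ := by
        rw [Real.sqrt_sq (by positivity)]
    _ = A * Kp ^ (m + 1) * Real.sqrt (N * Hh) * (ε / η) ^ (q + 2) := by rw [hρ]
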